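/- arXiv:2407.00441 — 4 statements merged into one kernel-verified Lean document; each statement's English description precedes it below -/
import Mathlib

section
/- Let k > 0, 0 < c < 2√k, ω_d = √(k − c²/4), T̄ > 0, d(t) = e^{−ct/2} cos(ω_d t), s(t) = (1/ω_d) e^{−ct/2} sin(ω_d t). There exists a constant K > 0, depending only on c, ω_d and T̄, such that for every continuous F : [0, T̄] → ℝ, the function x(t) = d(t)∫₀ᵗ F(τ)(d(τ) − (c/2)s(τ)) dτ + s(t)∫₀ᵗ F(τ)((c/2)d(τ) + ω_d² s(τ)) dτ satisfies, for all t ∈ [0, T̄], |x(t)| ≤ K e^{−ct/2} ((1 − e^{−ct})/c)^{1/2} (∫₀ᵗ F(τ)² dτ)^{1/2}, and moreover (∫₀^{T̄} x(t)² dt)^{1/2} ≤ K e^{−cT̄/2} (1 − e^{−cT̄})^{1/2} (∫₀^{T̄} F(τ)² dτ)^{1/2}. -/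
/-!
Both kernels `d - (c/2) s` and `(c/2) d + ω_d² s`, as well as `d` and `s` themselves, are
bounded by a constant times `e^{-cτ/2}`. Cauchy–Schwarz then bounds each Duhamel integral by
`C ‖e^{-cτ/2}‖_{L²(0,t)} ‖F‖_{L²(0,t)} = C ((1 - e^{-ct})/c)^{1/2} ‖F‖_{L²(0,t)}`, which is the
pointwise estimate. The `L²` estimate follows from the resulting uniform bound on `[0, T̄]`,
since for fixed `T̄ > 0` the factor `e^{-cT̄/2}(1 - e^{-cT̄})^{1/2}` is a positive constant.
-/

open MeasureTheory Real Set

lemma integral_abs_mul_abs_le_sqrt_mul_sqrt {α : Type*} [MeasurableSpace α] {μ : Measure α}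
    {f g : α → ℝ} (hf : MemLp f 2 μ) (hg : MemLp g 2 μ) :
    ∫ a, |f a| * |g a| ∂μ ≤ √(∫ a, f a ^ 2 ∂μ) * √(∫ a, g a ^ 2 ∂μ) := by
  have h := integral_mul_norm_le_Lp_mul_Lq Real.HolderConjugate.two_two
    (by simpa using hf) (by simpa using hg)
  simpa only [Real.norm_eq_abs, Real.rpow_two, sq_abs, ← Real.sqrt_eq_rpow] using h

lemma ContinuousOn.memLp_two_restrict_Ioc {a b : ℝ} {f : ℝ → ℝ}
    (hf : ContinuousOn f (Icc a b)) : MemLp f 2 (volume.restrict (Ioc a b)) := by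
  refine (memLp_two_iff_integrable_sq ?_).2 ?_
  · exact (hf.aestronglyMeasurable measurableSet_Icc).mono_measure
      (Measure.restrict_mono Ioc_subset_Icc_self le_rfl)
  · exact (hf.pow 2).integrableOn_Icc.mono_set Ioc_subset_Icc_self

lemma abs_intervalIntegral_mul_le_sqrt_mul_sqrt {a b : ℝ} (hab : a ≤ b) {f g : ℝ → ℝ}
    (hf : ContinuousOn f (Icc a b)) (hg : ContinuousOn g (Icc a b)) :
    |∫ τ in a..b, f τ * g τ| ≤ √(∫ τ in a..b, f τ ^ 2) * √(∫ τ in a..b, g τ ^ 2) := by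
  calc |∫ τ in a..b, f τ * g τ| ≤ ∫ τ in a..b, |f τ * g τ| :=
        intervalIntegral.abs_integral_le_integral_abs hab
    _ ≤ _ := by
        simp only [abs_mul, intervalIntegral.integral_of_le hab]
        exact integral_abs_mul_abs_le_sqrt_mul_sqrt hf.memLp_two_restrict_Ioc
          hg.memLp_two_restrict_Ioc

lemma integral_exp_neg_mul {c : ℝ} (hc : c ≠ 0) (t : ℝ) :
    ∫ τ in (0:ℝ)..t, exp (-c * τ) = (1 - exp (-c * t)) / c := by
  rw [intervalIntegral.integral_comp_mul_left exp (neg_ne_zero.2 hc), integral_exp]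
  simp only [mul_zero, exp_zero, smul_eq_mul, inv_neg]
  field_simp
  ring

lemma sqrt_intervalIntegral_sq_le {T M : ℝ} (hT : 0 ≤ T) (hM : 0 ≤ M) {x : ℝ → ℝ}
    (hx : ∀ t ∈ Ioc 0 T, |x t| ≤ M) :
    √(∫ t in (0:ℝ)..T, x t ^ 2) ≤ √T * M := by
  have h : ∫ t in (0:ℝ)..T, x t ^ 2 ≤ M ^ 2 * T := by
    refine (le_abs_self _).trans ?_
    simpa [abs_of_nonneg hT] using intervalIntegral.norm_integral_le_of_norm_le_const
      (a := 0) (b := T) (f := fun t => x t ^ 2) (C := M ^ 2) fun t ht => by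
        rw [uIoc_of_le hT] at ht
        simpa only [norm_pow, Real.norm_eq_abs] using pow_le_pow_left₀ (abs_nonneg _) (hx t ht) 2
  calc √(∫ t in (0:ℝ)..T, x t ^ 2) ≤ √(M ^ 2 * T) := Real.sqrt_le_sqrt h
    _ = √T * M := by rw [Real.sqrt_mul (sq_nonneg M), Real.sqrt_sq hM, mul_comm]

lemma intervalIntegral_sq_le_of_abs_le_exp {c C t : ℝ} (hc : c ≠ 0) (ht : 0 ≤ t) {G : ℝ → ℝ}
    (hG : ContinuousOn G (Icc 0 t)) (hbound : ∀ τ ∈ Icc 0 t, |G τ| ≤ C * exp (-c * τ / 2)) :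
    ∫ τ in (0:ℝ)..t, G τ ^ 2 ≤ C ^ 2 * ((1 - exp (-c * t)) / c) := by
  rw [← integral_exp_neg_mul hc, ← intervalIntegral.integral_const_mul]
  refine intervalIntegral.integral_mono_on ht ((hG.pow 2).intervalIntegrable_of_Icc ht)
    (Continuous.intervalIntegrable (by fun_prop) _ _) fun τ hτ => ?_
  calc G τ ^ 2 ≤ (C * exp (-c * τ / 2)) ^ 2 := sq_le_sq' (abs_le.1 (hbound τ hτ)).1
        (abs_le.1 (hbound τ hτ)).2
    _ = C ^ 2 * exp (-c * τ) := by rw [mul_pow, ← exp_nat_mul]; ring_nf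

lemma abs_intervalIntegral_mul_le_of_abs_le_exp {c C t : ℝ} (hc : c ≠ 0) (hC : 0 ≤ C)
    (ht : 0 ≤ t) {F G : ℝ → ℝ} (hF : ContinuousOn F (Icc 0 t)) (hG : ContinuousOn G (Icc 0 t))
    (hbound : ∀ τ ∈ Icc 0 t, |G τ| ≤ C * exp (-c * τ / 2)) :
    |∫ τ in (0:ℝ)..t, F τ * G τ| ≤
      C * √((1 - exp (-c * t)) / c) * √(∫ τ in (0:ℝ)..t, F τ ^ 2) := by
  have hG2 : √(∫ τ in (0:ℝ)..t, G τ ^ 2) ≤ C * √((1 - exp (-c * t)) / c) := by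
    calc √(∫ τ in (0:ℝ)..t, G τ ^ 2) ≤ √(C ^ 2 * ((1 - exp (-c * t)) / c)) :=
          Real.sqrt_le_sqrt (intervalIntegral_sq_le_of_abs_le_exp hc ht hG hbound)
      _ = C * √((1 - exp (-c * t)) / c) := by rw [Real.sqrt_mul (sq_nonneg C), Real.sqrt_sq hC]
  calc |∫ τ in (0:ℝ)..t, F τ * G τ|
      ≤ √(∫ τ in (0:ℝ)..t, F τ ^ 2) * √(∫ τ in (0:ℝ)..t, G τ ^ 2) :=
        abs_intervalIntegral_mul_le_sqrt_mul_sqrt ht hF hG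
    _ ≤ √(∫ τ in (0:ℝ)..t, F τ ^ 2) * (C * √((1 - exp (-c * t)) / c)) := by gcongr
    _ = _ := mul_comm _ _

noncomputable def dampedCos (c ω t : ℝ) : ℝ := exp (-c * t / 2) * cos (ω * t)

noncomputable def dampedSin (c ω t : ℝ) : ℝ := (1 / ω) * exp (-c * t / 2) * sin (ω * t)

noncomputable def duhamel (c ω : ℝ) (F : ℝ → ℝ) (t : ℝ) : ℝ :=
  dampedCos c ω t * (∫ τ in (0:ℝ)..t, F τ * (dampedCos c ω τ - (c / 2) * dampedSin c ω τ))
    + dampedSin c ω t * ∫ τ in (0:ℝ)..t, F τ * ((c / 2) * dampedCos c ω τ + ω ^ 2 * dampedSin c ω τ)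

noncomputable def duhamelConst (c ω : ℝ) : ℝ := 1 + |c| / 2 * |ω|⁻¹ + |ω|⁻¹ * (|c| / 2 + |ω|)

lemma duhamelConst_pos (c ω : ℝ) : 0 < duhamelConst c ω := by
  unfold duhamelConst; positivity

section DampedOscillator

variable (c ω : ℝ)

@[fun_prop]
lemma continuous_dampedCos : Continuous (dampedCos c ω) := by
  unfold dampedCos; fun_prop

@[fun_prop]
lemma continuous_dampedSin : Continuous (dampedSin c ω) := by
  unfold dampedSin; fun_prop

lemma abs_dampedCos_le (t : ℝ) : |dampedCos c ω t| ≤ exp (-c * t / 2) := by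
  rw [dampedCos, abs_mul, abs_exp]
  exact mul_le_of_le_one_right (exp_pos _).le (abs_cos_le_one _)

lemma abs_dampedSin_le (t : ℝ) : |dampedSin c ω t| ≤ |ω|⁻¹ * exp (-c * t / 2) := by
  rw [dampedSin, abs_mul, abs_mul, abs_exp, one_div, abs_inv]
  exact mul_le_of_le_one_right (by positivity) (abs_sin_le_one _)

lemma abs_dampedCos_sub_dampedSin_le (t : ℝ) :
    |dampedCos c ω t - (c / 2) * dampedSin c ω t| ≤ (1 + |c| / 2 * |ω|⁻¹) * exp (-c * t / 2) := by
  calc |dampedCos c ω t - (c / 2) * dampedSin c ω t|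
      ≤ |dampedCos c ω t| + |c| / 2 * |dampedSin c ω t| := by
        refine (abs_sub _ _).trans_eq ?_
        rw [abs_mul, abs_div, abs_two]
    _ ≤ exp (-c * t / 2) + |c| / 2 * (|ω|⁻¹ * exp (-c * t / 2)) := by
        gcongr
        exacts [abs_dampedCos_le c ω t, abs_dampedSin_le c ω t]
    _ = _ := by ring

lemma abs_dampedCos_add_dampedSin_le (t : ℝ) :
    |(c / 2) * dampedCos c ω t + ω ^ 2 * dampedSin c ω t| ≤ (|c| / 2 + |ω|) * exp (-c * t / 2) := by
  calc |(c / 2) * dampedCos c ω t + ω ^ 2 * dampedSin c ω t|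
      ≤ |c| / 2 * |dampedCos c ω t| + ω ^ 2 * |dampedSin c ω t| := by
        refine (abs_add_le _ _).trans_eq ?_
        rw [abs_mul, abs_mul, abs_div, abs_two, abs_sq]
    _ ≤ |c| / 2 * exp (-c * t / 2) + ω ^ 2 * (|ω|⁻¹ * exp (-c * t / 2)) := by
        gcongr
        exacts [abs_dampedCos_le c ω t, abs_dampedSin_le c ω t]
    _ = _ := by
        rcases eq_or_ne ω 0 with rfl | hω
        · simp
        · rw [← sq_abs]; field_simp

end DampedOscillator

lemma abs_duhamel_le {c : ℝ} (hc : c ≠ 0) (ω : ℝ) {F : ℝ → ℝ} {t : ℝ} (ht : 0 ≤ t)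
    (hF : ContinuousOn F (Icc 0 t)) :
    |duhamel c ω F t| ≤ duhamelConst c ω * exp (-c * t / 2) *
      √((1 - exp (-c * t)) / c) * √(∫ τ in (0:ℝ)..t, F τ ^ 2) := by
  set S := √((1 - exp (-c * t)) / c)
  set Q := √(∫ τ in (0:ℝ)..t, F τ ^ 2)
  have hI₁ := abs_intervalIntegral_mul_le_of_abs_le_exp hc (by positivity) ht hF
    (by fun_prop) fun τ _ => abs_dampedCos_sub_dampedSin_le c ω τ
  have hI₂ := abs_intervalIntegral_mul_le_of_abs_le_exp hc (by positivity) ht hF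
    (by fun_prop) fun τ _ => abs_dampedCos_add_dampedSin_le c ω τ
  calc |duhamel c ω F t|
      ≤ |dampedCos c ω t| * |∫ τ in (0:ℝ)..t, F τ * (dampedCos c ω τ - c / 2 * dampedSin c ω τ)|
        + |dampedSin c ω t| *
          |∫ τ in (0:ℝ)..t, F τ * (c / 2 * dampedCos c ω τ + ω ^ 2 * dampedSin c ω τ)| := by
        rw [← abs_mul, ← abs_mul]; exact abs_add_le _ _
    _ ≤ exp (-c * t / 2) * ((1 + |c| / 2 * |ω|⁻¹) * S * Q)
        + |ω|⁻¹ * exp (-c * t / 2) * ((|c| / 2 + |ω|) * S * Q) := by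
        gcongr
        exacts [abs_dampedCos_le c ω t, abs_dampedSin_le c ω t]
    _ = _ := by rw [duhamelConst]; ring

lemma sqrt_intervalIntegral_sq_duhamel_le {c : ℝ} (hc : 0 < c) (ω : ℝ) {F : ℝ → ℝ} {T : ℝ}
    (hT : 0 ≤ T) (hF : ContinuousOn F (Icc 0 T)) :
    √(∫ t in (0:ℝ)..T, duhamel c ω F t ^ 2) ≤
      duhamelConst c ω * √(T / c) * √(∫ τ in (0:ℝ)..T, F τ ^ 2) := by
  have hunif : ∀ t ∈ Ioc 0 T, |duhamel c ω F t| ≤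
      duhamelConst c ω * 1 * √(1 / c) * √(∫ τ in (0:ℝ)..T, F τ ^ 2) := fun t ht => by
    refine (abs_duhamel_le hc.ne' ω ht.1.le (hF.mono (Icc_subset_Icc_right ht.2))).trans ?_
    have := duhamelConst_pos c ω
    gcongr
    · exact exp_le_one_iff.2 (by nlinarith [ht.1])
    · linarith [exp_pos (-c * t)]
    · exact intervalIntegral.integral_mono_interval le_rfl ht.1.le ht.2
        (Filter.Eventually.of_forall fun τ => sq_nonneg (F τ))
        ((hF.pow 2).intervalIntegrable_of_Icc hT)
  calc √(∫ t in (0:ℝ)..T, duhamel c ω F t ^ 2)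
      ≤ √T * (duhamelConst c ω * 1 * √(1 / c) * √(∫ τ in (0:ℝ)..T, F τ ^ 2)) :=
        sqrt_intervalIntegral_sq_le hT
          (by have := duhamelConst_pos c ω; positivity) hunif
    _ = _ := by
        rw [Real.sqrt_div' _ hc.le, Real.sqrt_div' _ hc.le, Real.sqrt_one]
        ring

theorem stmt9_general (c : ℝ) (hc0 : 0 < c)
    (ωd : ℝ)
    (T : ℝ) (hT : 0 < T)
    (d s : ℝ → ℝ)
    (hd : d = fun t => Real.exp (-c * t / 2) * Real.cos (ωd * t))
    (hs : s = fun t => (1 / ωd) * Real.exp (-c * t / 2) * Real.sin (ωd * t)) :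
    ∃ K : ℝ, 0 < K ∧
      ∀ F : ℝ → ℝ, ContinuousOn F (Set.Icc 0 T) →
        ∀ x : ℝ → ℝ,
          x = (fun t =>
            d t * (∫ τ in (0:ℝ)..t, F τ * (d τ - (c / 2) * s τ))
            + s t * ∫ τ in (0:ℝ)..t, F τ * ((c / 2) * d τ + ωd ^ 2 * s τ)) →
          (∀ t ∈ Set.Icc (0:ℝ) T,
            |x t| ≤ K * Real.exp (-c * t / 2) *
              Real.sqrt ((1 - Real.exp (-c * t)) / c) *
              Real.sqrt (∫ τ in (0:ℝ)..t, F τ ^ 2)) ∧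
          Real.sqrt (∫ t in (0:ℝ)..T, x t ^ 2) ≤
            K * Real.exp (-c * T / 2) * Real.sqrt (1 - Real.exp (-c * T)) *
              Real.sqrt (∫ τ in (0:ℝ)..T, F τ ^ 2) := by
  obtain rfl : d = dampedCos c ωd := hd
  obtain rfl : s = dampedSin c ωd := hs
  set K₀ := duhamelConst c ωd
  have hK₀ : 0 < K₀ := duhamelConst_pos c ωd
  set A := exp (-c * T / 2) * √(1 - exp (-c * T))
  have hA : 0 < A := by
    have : exp (-c * T) < 1 := exp_lt_one_iff.2 (by nlinarith)
    exact mul_pos (exp_pos _) (Real.sqrt_pos.2 (by linarith))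
  refine ⟨K₀ * max 1 (√(T / c) / A), by positivity, fun F hF x hx => ?_⟩
  obtain rfl : x = duhamel c ωd F := hx
  constructor
  · intro t ht
    refine (abs_duhamel_le hc0.ne' ωd ht.1 (hF.mono (Icc_subset_Icc_right ht.2))).trans ?_
    gcongr
    exact le_mul_of_one_le_right hK₀.le (le_max_left _ _)
  · calc √(∫ t in (0:ℝ)..T, duhamel c ωd F t ^ 2)
        ≤ K₀ * (√(T / c) / A) * A * √(∫ τ in (0:ℝ)..T, F τ ^ 2) := by
          rw [mul_assoc K₀, div_mul_cancel₀ _ hA.ne']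
          exact sqrt_intervalIntegral_sq_duhamel_le hc0 ωd hT.le hF
      _ ≤ K₀ * max 1 (√(T / c) / A) * A * √(∫ τ in (0:ℝ)..T, F τ ^ 2) := by
          gcongr
          exact le_max_right _ _
      _ = _ := by ring

/-- Sup-norm and L² bounds on the Duhamel solution with homogeneous initial
conditions: there is `K > 0` (depending only on `c`, `ω_d`, `T̄`) such that for every
continuous `F`, `|x(t)| ≤ K e^{-ct/2}((1 − e^{-ct})/c)^{1/2} ‖F‖_{L²(0,t)}` for all
`t ∈ [0, T̄]`, and `‖x‖_{L²(0,T̄)} ≤ K e^{-cT̄/2}(1 − e^{-cT̄})^{1/2} ‖F‖_{L²(0,T̄)}`. -/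
theorem stmt9 (k c : ℝ) (hk : 0 < k) (hc0 : 0 < c) (hc : c < 2 * Real.sqrt k)
    (ωd : ℝ) (hωd : ωd = Real.sqrt (k - c ^ 2 / 4))
    (T : ℝ) (hT : 0 < T)
    (d s : ℝ → ℝ)
    (hd : d = fun t => Real.exp (-c * t / 2) * Real.cos (ωd * t))
    (hs : s = fun t => (1 / ωd) * Real.exp (-c * t / 2) * Real.sin (ωd * t)) :
    ∃ K : ℝ, 0 < K ∧
      ∀ F : ℝ → ℝ, ContinuousOn F (Set.Icc 0 T) →
        ∀ x : ℝ → ℝ,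
          x = (fun t =>
            d t * (∫ τ in (0:ℝ)..t, F τ * (d τ - (c / 2) * s τ))
            + s t * ∫ τ in (0:ℝ)..t, F τ * ((c / 2) * d τ + ωd ^ 2 * s τ)) →
          (∀ t ∈ Set.Icc (0:ℝ) T,
            |x t| ≤ K * Real.exp (-c * t / 2) *
              Real.sqrt ((1 - Real.exp (-c * t)) / c) *
              Real.sqrt (∫ τ in (0:ℝ)..t, F τ ^ 2)) ∧
          Real.sqrt (∫ t in (0:ℝ)..T, x t ^ 2) ≤
            K * Real.exp (-c * T / 2) * Real.sqrt (1 - Real.exp (-c * T)) *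
              Real.sqrt (∫ τ in (0:ℝ)..T, F τ ^ 2) :=
  stmt9_general c hc0 ωd T hT d s hd hs
end

section
/- Let k > 0, 0 ≤ c < 2√k, ω_d = √(k − c²/4), T̄ > 0, d(t) = e^{−ct/2} cos(ω_d t), s(t) = (1/ω_d) e^{−ct/2} sin(ω_d t), and let F : [0, T̄] → ℝ be continuous. Then the value at the endpoint of x(t) = d(t)∫₀ᵗ F(τ)(d(τ) − (c/2)s(τ)) dτ + s(t)∫₀ᵗ F(τ)((c/2)d(τ) + ω_d² s(τ)) dτ satisfies |x(T̄)| ≤ e^{−cT̄/2} · ‖F‖_{L²(0,T̄)} · ( ‖d − (c/2)s‖²_{L²(0,T̄)} + ‖(c/(2ω_d))d + ω_d s‖²_{L²(0,T̄)} )^{1/2}, where ‖g‖_{L²(0,T̄)} = (∫₀^{T̄} g(t)² dt)^{1/2}. -/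
/-!
Writing `x(T) = d(T) A + (ω_d s(T)) B` with `A = ∫ F (d − (c/2) s)` and
`B = ∫ F ((c/(2ω_d)) d + ω_d s)`, the energy identity `d(T)² + (ω_d s(T))² = e^{−cT}`
and Cauchy–Schwarz in `ℝ²` give `|x(T)| ≤ e^{−cT/2} √(A² + B²)`; Cauchy–Schwarz in
`L²(0, T)` then bounds `A` and `B`.
-/

open MeasureTheory Real

/-- Via the discriminant of the nonnegative quadratic `L ↦ ∫ (L f + g)²`. -/
theorem sq_integral_mul_le_integral_sq_mul_integral_sq {α : Type*} [MeasurableSpace α]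
    {μ : Measure α} {f g : α → ℝ} (hf : Integrable (fun x => f x ^ 2) μ)
    (hg : Integrable (fun x => g x ^ 2) μ) (hfg : Integrable (fun x => f x * g x) μ) :
    (∫ x, f x * g x ∂μ) ^ 2 ≤ (∫ x, f x ^ 2 ∂μ) * ∫ x, g x ^ 2 ∂μ := by
  have hquad : ∀ L : ℝ, 0 ≤ (∫ x, f x ^ 2 ∂μ) * (L * L) + 2 * (∫ x, f x * g x ∂μ) * L
      + ∫ x, g x ^ 2 ∂μ := by
    intro L
    have hexpand : ∫ x, (L * f x + g x) ^ 2 ∂μ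
        = L ^ 2 * ∫ x, f x ^ 2 ∂μ + (2 * L * ∫ x, f x * g x ∂μ + ∫ x, g x ^ 2 ∂μ) := by
      rw [← integral_const_mul, ← integral_const_mul, ← integral_add (hfg.const_mul _) hg,
        ← integral_add (hf.const_mul _) ((hfg.const_mul _).fun_add hg)]
      congr 1
      funext x
      ring
    have := integral_nonneg (μ := μ) (f := fun x => (L * f x + g x) ^ 2) fun x => sq_nonneg _
    linarith
  have := discrim_le_zero hquad
  rw [discrim] at this
  linarith

theorem intervalIntegral.sq_integral_mul_le_of_continuousOn {a b : ℝ} (hab : a ≤ b)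
    {f g : ℝ → ℝ} (hf : ContinuousOn f (Set.Icc a b)) (hg : ContinuousOn g (Set.Icc a b)) :
    (∫ x in a..b, f x * g x) ^ 2 ≤ (∫ x in a..b, f x ^ 2) * ∫ x in a..b, g x ^ 2 := by
  have hint : ∀ h : ℝ → ℝ, ContinuousOn h (Set.Icc a b) → IntegrableOn h (Set.Ioc a b) :=
    fun h hh => (hh.integrableOn_Icc).mono_set Set.Ioc_subset_Icc_self
  simp only [intervalIntegral.integral_of_le hab]
  exact sq_integral_mul_le_integral_sq_mul_integral_sq (hint _ (hf.pow 2)) (hint _ (hg.pow 2))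
    (hint _ (hf.mul hg))

theorem abs_mul_add_mul_le_of_sq_add_sq_eq {a b E A B M I J : ℝ} (hab : a ^ 2 + b ^ 2 = E ^ 2)
    (hE : 0 ≤ E) (hM : 0 ≤ M) (hA : A ^ 2 ≤ M * I) (hB : B ^ 2 ≤ M * J) :
    |a * A + b * B| ≤ E * √M * √(I + J) := by
  rw [← sqrt_sq hE, ← sqrt_mul (sq_nonneg E), ← sqrt_mul (mul_nonneg (sq_nonneg E) hM)]
  apply abs_le_sqrt
  nlinarith [sq_nonneg (a * B - b * A), sq_nonneg a, sq_nonneg b]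

section DampedOscillator

variable (c ω : ℝ)

theorem mul_one_div_mul_exp_mul_sin (t : ℝ) :
    ω * (1 / ω * exp (-c * t / 2) * sin (ω * t)) = exp (-c * t / 2) * sin (ω * t) := by
  rcases eq_or_ne ω 0 with rfl | hω
  · simp
  · field_simp

theorem exp_mul_cos_sq_add_mul_sq (t : ℝ) :
    (exp (-c * t / 2) * cos (ω * t)) ^ 2
      + (ω * (1 / ω * exp (-c * t / 2) * sin (ω * t))) ^ 2 = exp (-c * t / 2) ^ 2 := by
  rw [mul_one_div_mul_exp_mul_sin]
  linear_combination exp (-c * t / 2) ^ 2 * cos_sq_add_sin_sq (ω * t)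

/-- The factor `ω` can be pulled out of the second integrand of `x` even when `ω = 0`,
because then `1 / ω = 0` makes `s` vanish. -/
theorem mul_half_mul_add_sq_mul_eq {u : ℝ} (hu : ω = 0 → u = 0) (p q : ℝ) :
    u * (c / 2 * p + ω ^ 2 * q) = ω * u * (c / (2 * ω) * p + ω * q) := by
  rcases eq_or_ne ω 0 with rfl | hω
  · simp [hu rfl]
  · field_simp

end DampedOscillator

theorem stmt10_general (c : ℝ) (ωd : ℝ)
    (T : ℝ) (hT : 0 < T)
    (d s : ℝ → ℝ)
    (hd : d = fun t => Real.exp (-c * t / 2) * Real.cos (ωd * t))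
    (hs : s = fun t => (1 / ωd) * Real.exp (-c * t / 2) * Real.sin (ωd * t))
    (F : ℝ → ℝ) (hF : ContinuousOn F (Set.Icc 0 T))
    (x : ℝ → ℝ)
    (hx : x = fun t =>
      d t * (∫ τ in (0:ℝ)..t, F τ * (d τ - (c / 2) * s τ))
      + s t * ∫ τ in (0:ℝ)..t, F τ * ((c / 2) * d τ + ωd ^ 2 * s τ)) :
    |x T| ≤ Real.exp (-c * T / 2) * Real.sqrt (∫ t in (0:ℝ)..T, F t ^ 2) *
      Real.sqrt
        ((Real.sqrt (∫ t in (0:ℝ)..T, (d t - (c / 2) * s t) ^ 2)) ^ 2 +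
         (Real.sqrt (∫ t in (0:ℝ)..T, ((c / (2 * ωd)) * d t + ωd * s t) ^ 2)) ^ 2) := by
  have hdc : Continuous d := by rw [hd]; fun_prop
  have hsc : Continuous s := by rw [hs]; fun_prop
  have hs0 : ωd = 0 → s T = 0 := by rintro rfl; simp [hs]
  have hsecond : s T * ∫ τ in (0:ℝ)..T, F τ * (c / 2 * d τ + ωd ^ 2 * s τ)
      = ωd * s T * ∫ τ in (0:ℝ)..T, F τ * (c / (2 * ωd) * d τ + ωd * s τ) := by
    rw [← intervalIntegral.integral_const_mul, ← intervalIntegral.integral_const_mul]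
    congr 1 with τ
    linear_combination F τ * mul_half_mul_add_sq_mul_eq c ωd hs0 (d τ) (s τ)
  have hsq_nonneg : ∀ g : ℝ → ℝ, 0 ≤ ∫ t in (0:ℝ)..T, g t ^ 2 :=
    fun g => intervalIntegral.integral_nonneg hT.le fun t _ => sq_nonneg (g t)
  simp only [hx]
  rw [hsecond, sq_sqrt (hsq_nonneg _), sq_sqrt (hsq_nonneg _)]
  refine abs_mul_add_mul_le_of_sq_add_sq_eq ?_ (exp_nonneg _) (hsq_nonneg F)
    (intervalIntegral.sq_integral_mul_le_of_continuousOn hT.le hF (by fun_prop))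
    (intervalIntegral.sq_integral_mul_le_of_continuousOn hT.le hF (by fun_prop))
  rw [hd, hs]
  exact exp_mul_cos_sq_add_mul_sq c ωd T

/-- Final-displacement bound. For continuous `F` and
`x(t) = d(t)∫₀ᵗ F(d − (c/2)s) + s(t)∫₀ᵗ F((c/2)d + ω_d²s)`,
`|x(T̄)| ≤ e^{-cT̄/2} ‖F‖_{L²(0,T̄)} (‖d − (c/2)s‖²_{L²} + ‖(c/(2ω_d))d + ω_d s‖²_{L²})^{1/2}`. -/
theorem stmt10 (k c : ℝ) (hk : 0 < k) (hc0 : 0 ≤ c) (hc : c < 2 * Real.sqrt k)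
    (ωd : ℝ) (hωd : ωd = Real.sqrt (k - c ^ 2 / 4))
    (T : ℝ) (hT : 0 < T)
    (d s : ℝ → ℝ)
    (hd : d = fun t => Real.exp (-c * t / 2) * Real.cos (ωd * t))
    (hs : s = fun t => (1 / ωd) * Real.exp (-c * t / 2) * Real.sin (ωd * t))
    (F : ℝ → ℝ) (hF : ContinuousOn F (Set.Icc 0 T))
    (x : ℝ → ℝ)
    (hx : x = fun t =>
      d t * (∫ τ in (0:ℝ)..t, F τ * (d τ - (c / 2) * s τ))
      + s t * ∫ τ in (0:ℝ)..t, F τ * ((c / 2) * d τ + ωd ^ 2 * s τ)) :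
    |x T| ≤ Real.exp (-c * T / 2) * Real.sqrt (∫ t in (0:ℝ)..T, F t ^ 2) *
      Real.sqrt
        ((Real.sqrt (∫ t in (0:ℝ)..T, (d t - (c / 2) * s t) ^ 2)) ^ 2 +
         (Real.sqrt (∫ t in (0:ℝ)..T, ((c / (2 * ωd)) * d t + ωd * s t) ^ 2)) ^ 2) :=
  stmt10_general c ωd T hT d s hd hs F hF x hx
end

section
/- Let k > 0, c ≥ 0, T̄ > 0, let u : [0, T̄] → ℝ be twice continuously differentiable with u(0) = u(T̄) = 0, and let f(t) = ü(t) + c·u̇(t) + k·u(t) be the corresponding excitation function. Then (1/2) e^{cT̄} u̇(T̄)² − (1/2) u̇(0)² = ∫₀^{T̄} e^{ct} f(t) u̇(t) dt − c ∫₀^{T̄} ℒ_c(u(t), u̇(t), t) dt, where ℒ_c(x, v, t) = (1/2) e^{ct} v² − (1/2) k e^{ct} x². -/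
/-! The weighted energy `E(t) = ½ e^{ct} (u̇² + k u²)` satisfies
`Ė = e^{ct} f u̇ − c ℒ_c(u, u̇, t)` with `f = ü + c u̇ + k u`, so the identity is the fundamental
theorem of calculus for `E` on `[0, T̄]`; the boundary conditions kill the potential terms of
`E(T̄) − E(0)`. -/

open Real Set intervalIntegral

noncomputable def dampedLagrangian (k c x v t : ℝ) : ℝ :=
  1 / 2 * exp (c * t) * v ^ 2 - 1 / 2 * k * exp (c * t) * x ^ 2

noncomputable def dampedEnergy (k c x v t : ℝ) : ℝ :=
  1 / 2 * exp (c * t) * v ^ 2 + 1 / 2 * k * exp (c * t) * x ^ 2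

section

variable {k c : ℝ} {u u' : ℝ → ℝ}

theorem hasDerivWithinAt_dampedEnergy {s : Set ℝ} {t a : ℝ}
    (hu : HasDerivWithinAt u (u' t) s t) (hu' : HasDerivWithinAt u' a s t) :
    HasDerivWithinAt (fun t => dampedEnergy k c (u t) (u' t) t)
      (exp (c * t) * (a + c * u' t + k * u t) * u' t -
        c * dampedLagrangian k c (u t) (u' t) t) s t := by
  have hexp : HasDerivWithinAt (fun t => exp (c * t)) (exp (c * t) * c) s t := by
    simpa using ((hasDerivWithinAt_id t s).const_mul c).exp
  refine (((hexp.const_mul (1 / 2)).fun_mul (hu'.fun_pow 2)).fun_add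
    ((hexp.const_mul (1 / 2 * k)).fun_mul (hu.fun_pow 2))).congr_deriv ?_
  simp only [dampedLagrangian]
  push_cast
  ring

theorem continuousOn_dampedLagrangian {s : Set ℝ} (hu : ContinuousOn u s)
    (hu' : ContinuousOn u' s) :
    ContinuousOn (fun t => dampedLagrangian k c (u t) (u' t) t) s := by
  unfold dampedLagrangian
  fun_prop

theorem dampedEnergy_sub_dampedEnergy {a b : ℝ} (hab : a ≤ b) {u'' : ℝ → ℝ}
    (hu : ∀ t ∈ Icc a b, HasDerivWithinAt u (u' t) (Icc a b) t)
    (hu' : ∀ t ∈ Icc a b, HasDerivWithinAt u' (u'' t) (Icc a b) t)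
    (hu''_cont : ContinuousOn u'' (Icc a b)) :
    dampedEnergy k c (u b) (u' b) b - dampedEnergy k c (u a) (u' a) a =
      (∫ t in a..b, exp (c * t) * (u'' t + c * u' t + k * u t) * u' t) -
        c * ∫ t in a..b, dampedLagrangian k c (u t) (u' t) t := by
  have hE : ∀ t ∈ Icc a b, HasDerivWithinAt (fun t => dampedEnergy k c (u t) (u' t) t)
      (exp (c * t) * (u'' t + c * u' t + k * u t) * u' t -
        c * dampedLagrangian k c (u t) (u' t) t) (Icc a b) t :=
    fun t ht => hasDerivWithinAt_dampedEnergy (hu t ht) (hu' t ht)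
  have hu_cont : ContinuousOn u (Icc a b) := fun t ht => (hu t ht).continuousWithinAt
  have hu'_cont : ContinuousOn u' (Icc a b) := fun t ht => (hu' t ht).continuousWithinAt
  have hwork : IntervalIntegrable (fun t => exp (c * t) * (u'' t + c * u' t + k * u t) * u' t)
      MeasureTheory.volume a b :=
    ContinuousOn.intervalIntegrable_of_Icc hab (by fun_prop)
  have hL : IntervalIntegrable (fun t => dampedLagrangian k c (u t) (u' t) t)
      MeasureTheory.volume a b :=
    (continuousOn_dampedLagrangian hu_cont hu'_cont).intervalIntegrable_of_Icc hab
  rw [← integral_const_mul, ← integral_sub hwork (hL.const_mul c)]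
  refine (integral_eq_sub_of_hasDerivAt_of_le hab (fun t ht => (hE t ht).continuousWithinAt)
    (fun t ht => (hE t (Ioo_subset_Icc_self ht)).hasDerivAt (Icc_mem_nhds ht.1 ht.2))
    (hwork.sub (hL.const_mul c))).symm

end

theorem stmt12_general (k c : ℝ)
    (T : ℝ) (hT : 0 < T)
    (u u' u'' : ℝ → ℝ)
    (hu' : ∀ t ∈ Set.Icc (0:ℝ) T, HasDerivWithinAt u (u' t) (Set.Icc 0 T) t)
    (hu'' : ∀ t ∈ Set.Icc (0:ℝ) T, HasDerivWithinAt u' (u'' t) (Set.Icc 0 T) t)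
    (hu''cont : ContinuousOn u'' (Set.Icc 0 T))
    (h0 : u 0 = 0) (hTend : u T = 0)
    (f : ℝ → ℝ) (hf : f = fun t => u'' t + c * u' t + k * u t) :
    (1 / 2) * Real.exp (c * T) * (u' T) ^ 2 - (1 / 2) * (u' 0) ^ 2 =
      (∫ t in (0:ℝ)..T, Real.exp (c * t) * f t * u' t) -
        c * ∫ t in (0:ℝ)..T,
          ((1 / 2) * Real.exp (c * t) * (u' t) ^ 2 -
           (1 / 2) * k * Real.exp (c * t) * (u t) ^ 2) := by
  subst hf
  have balance := dampedEnergy_sub_dampedEnergy (k := k) (c := c) hT.le hu' hu'' hu''cont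
  simp only [dampedEnergy, dampedLagrangian, h0, hTend, mul_zero, exp_zero] at balance
  rw [← balance]
  ring

/-- Conservation law in the dissipative setting. For a C² function `u` on
`[0, T̄]` with `u(0) = u(T̄) = 0` and excitation `f = ü + cu̇ + ku`,
`(1/2)e^{cT̄}u̇(T̄)² − (1/2)u̇(0)² = ∫₀^T̄ e^{ct} f u̇ − c∫₀^T̄ ℒ_c(u, u̇, t)`,
where `ℒ_c(x, v, t) = (1/2)e^{ct}v² − (1/2)ke^{ct}x²`. -/
theorem stmt12 (k c : ℝ) (hk : 0 < k) (hc0 : 0 ≤ c)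
    (T : ℝ) (hT : 0 < T)
    (u u' u'' : ℝ → ℝ)
    (hu' : ∀ t ∈ Set.Icc (0:ℝ) T, HasDerivWithinAt u (u' t) (Set.Icc 0 T) t)
    (hu'' : ∀ t ∈ Set.Icc (0:ℝ) T, HasDerivWithinAt u' (u'' t) (Set.Icc 0 T) t)
    (hu''cont : ContinuousOn u'' (Set.Icc 0 T))
    (h0 : u 0 = 0) (hTend : u T = 0)
    (f : ℝ → ℝ) (hf : f = fun t => u'' t + c * u' t + k * u t) :
    (1 / 2) * Real.exp (c * T) * (u' T) ^ 2 - (1 / 2) * (u' 0) ^ 2 =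
      (∫ t in (0:ℝ)..T, Real.exp (c * t) * f t * u' t) -
        c * ∫ t in (0:ℝ)..T,
          ((1 / 2) * Real.exp (c * t) * (u' t) ^ 2 -
           (1 / 2) * k * Real.exp (c * t) * (u t) ^ 2) :=
  stmt12_general k c T hT u u' u'' hu' hu'' hu''cont h0 hTend f hf
end

section
/- Let k > 0, c > 0, T̄ > 0, let x : [0, T̄] → ℝ be twice continuously differentiable with f(t) = ẍ(t) + c·ẋ(t) + k·x(t) continuously differentiable, and write ‖g‖_c = (∫₀^{T̄} e^{ct} g(t)² dt)^{1/2} and ℋ(0) = (1/2)ẋ(0)² + (1/2)k x(0)². Then (1/2)‖ẋ‖_c² + (1/2) k ‖x‖_c² ≤ ( ‖f‖_c + (1/c)(e^{cT̄} − 1) ‖e^{−c·} f′(·)‖_c ) ‖x‖_c + (1/c)(e^{cT̄} − 1)( ℋ(0) − f(0)x(0) ). -/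
/-!
Multiplying the equation by `ẋ` gives the dissipation law
`ℋ(t) − f(t)x(t) = ℋ(0) − f(0)x(0) − ∫₀ᵗ f′x − c∫₀ᵗ ẋ²`.
Dropping the damping term and writing `f′x = e^{cs}(e^{−cs}f′)·x`, the weighted
Cauchy–Schwarz inequality on `[0, t] ⊆ [0, T̄]` bounds `ℋ(t)` by
`f(t)x(t) + ℋ(0) − f(0)x(0) + ‖e^{−c·}f′‖_c‖x‖_c`. Integrating this pointwise bound
against `e^{ct}dt` and applying Cauchy–Schwarz once more to `∫ e^{ct} f x` gives the claim.
-/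

open Set MeasureTheory Real

section CauchySchwarz

variable {α : Type*} [MeasurableSpace α] {μ : Measure α} {w u v : α → ℝ}

theorem sq_integral_mul_le_integral_mul_sq (hw : 0 ≤ᵐ[μ] w)
    (hu : Integrable (fun a => w a * u a ^ 2) μ) (hv : Integrable (fun a => w a * v a ^ 2) μ)
    (huv : Integrable (fun a => w a * u a * v a) μ) :
    (∫ a, w a * u a * v a ∂μ) ^ 2 ≤ (∫ a, w a * u a ^ 2 ∂μ) * ∫ a, w a * v a ^ 2 ∂μ := by
  have hquad : ∀ s : ℝ, 0 ≤ (∫ a, w a * v a ^ 2 ∂μ) * (s * s)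
      + (-2 * ∫ a, w a * u a * v a ∂μ) * s + ∫ a, w a * u a ^ 2 ∂μ := by
    intro s
    have hexpand : (fun a => w a * (u a - s * v a) ^ 2) = fun a =>
        s * s * (w a * v a ^ 2) + -2 * s * (w a * u a * v a) + w a * u a ^ 2 := by
      ext a; ring
    have hnonneg : 0 ≤ ∫ a, w a * (u a - s * v a) ^ 2 ∂μ :=
      integral_nonneg_of_ae (hw.mono fun a ha => mul_nonneg ha (sq_nonneg _))
    rw [hexpand,
      integral_add (f := fun a => s * s * (w a * v a ^ 2) + -2 * s * (w a * u a * v a))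
        ((hv.const_mul _).add (huv.const_mul _)) hu,
      integral_add (f := fun a => s * s * (w a * v a ^ 2)) (hv.const_mul _) (huv.const_mul _),
      integral_const_mul, integral_const_mul] at hnonneg
    linarith
  have := discrim_le_zero hquad
  rw [discrim] at this
  nlinarith

end CauchySchwarz

theorem abs_intervalIntegral_mul_le {a b : ℝ} {w u v : ℝ → ℝ} (hab : a ≤ b)
    (hw : ∀ t ∈ Icc a b, 0 ≤ w t) (hwc : ContinuousOn w (Icc a b))
    (huc : ContinuousOn u (Icc a b)) (hvc : ContinuousOn v (Icc a b)) :
    |∫ t in a..b, w t * u t * v t| ≤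
      √(∫ t in a..b, w t * u t ^ 2) * √(∫ t in a..b, w t * v t ^ 2) := by
  have hw' : 0 ≤ᵐ[volume.restrict (Ioc a b)] w :=
    ae_restrict_of_forall_mem measurableSet_Ioc fun t ht => hw t (Ioc_subset_Icc_self ht)
  rw [intervalIntegral.integral_of_le hab, intervalIntegral.integral_of_le hab,
    intervalIntegral.integral_of_le hab,
    ← sqrt_mul (integral_nonneg_of_ae (hw'.mono fun t ht => mul_nonneg ht (sq_nonneg _)))]
  exact abs_le_sqrt <| sq_integral_mul_le_integral_mul_sq hw'
    ((hwc.mul (huc.pow 2)).intervalIntegrable_of_Icc hab).1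
    ((hwc.mul (hvc.pow 2)).intervalIntegrable_of_Icc hab).1
    (((hwc.mul huc).mul hvc).intervalIntegrable_of_Icc hab).1

theorem integral_exp_mul {c : ℝ} (hc : c ≠ 0) (a b : ℝ) :
    ∫ t in a..b, exp (c * t) = (exp (c * b) - exp (c * a)) / c := by
  rw [intervalIntegral.integral_comp_mul_left (fun t => exp t) hc, integral_exp, smul_eq_mul,
    inv_mul_eq_div]

/-- The norm `‖g‖_c` on `[0, T]`. -/
noncomputable def weightedNorm (c T : ℝ) (g : ℝ → ℝ) : ℝ :=
  √(∫ t in (0 : ℝ)..T, exp (c * t) * g t ^ 2)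

theorem abs_integral_mul_le_weightedNorm_mul {c T t : ℝ} {u v : ℝ → ℝ} (ht : t ∈ Icc 0 T)
    (huc : ContinuousOn u (Icc 0 T)) (hvc : ContinuousOn v (Icc 0 T)) :
    |∫ s in (0 : ℝ)..t, exp (c * s) * u s * v s| ≤ weightedNorm c T u * weightedNorm c T v := by
  have hsub : Icc 0 t ⊆ Icc 0 T := Icc_subset_Icc_right ht.2
  have hexpc : Continuous fun s => exp (c * s) := by fun_prop
  have hmono : ∀ g : ℝ → ℝ, ContinuousOn g (Icc 0 T) →
      √(∫ s in (0 : ℝ)..t, exp (c * s) * g s ^ 2) ≤ weightedNorm c T g := fun g hg =>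
    sqrt_le_sqrt <| intervalIntegral.integral_mono_interval le_rfl ht.1 ht.2
      (Filter.Eventually.of_forall fun s => by positivity)
      ((hexpc.continuousOn.mul (hg.pow 2)).intervalIntegrable_of_Icc (ht.1.trans ht.2))
  calc |∫ s in (0 : ℝ)..t, exp (c * s) * u s * v s|
      ≤ √(∫ s in (0 : ℝ)..t, exp (c * s) * u s ^ 2) *
          √(∫ s in (0 : ℝ)..t, exp (c * s) * v s ^ 2) :=
        abs_intervalIntegral_mul_le ht.1 (fun s _ => (exp_pos _).le) hexpc.continuousOn
          (huc.mono hsub) (hvc.mono hsub)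
    _ ≤ weightedNorm c T u * weightedNorm c T v :=
        mul_le_mul (hmono u huc) (hmono v hvc) (sqrt_nonneg _) (sqrt_nonneg _)

/-- The mechanical energy `ℋ(t)`. -/
noncomputable def energy (k : ℝ) (x x' : ℝ → ℝ) (t : ℝ) : ℝ :=
  1 / 2 * x' t ^ 2 + 1 / 2 * k * x t ^ 2

section Oscillator

variable {k c a b t : ℝ} {x x' x'' f f' : ℝ → ℝ}

theorem hasDerivWithinAt_energy_sub_mul {s : Set ℝ}
    (hx' : HasDerivWithinAt x (x' t) s t) (hx'' : HasDerivWithinAt x' (x'' t) s t)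
    (hf' : HasDerivWithinAt f (f' t) s t) (hf : f t = x'' t + c * x' t + k * x t) :
    HasDerivWithinAt (fun t => energy k x x' t - f t * x t)
      (-(f' t * x t) - c * x' t ^ 2) s t := by
  refine ((((hx''.pow 2).const_mul (1 / 2)).add ((hx'.pow 2).const_mul (1 / 2 * k))).sub
    (hf'.mul hx')).congr_deriv ?_
  rw [hf]
  push_cast
  ring

theorem energy_dissipation_law (hx' : ∀ t ∈ Icc a b, HasDerivWithinAt x (x' t) (Icc a b) t)
    (hx'' : ∀ t ∈ Icc a b, HasDerivWithinAt x' (x'' t) (Icc a b) t)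
    (hf' : ∀ t ∈ Icc a b, HasDerivWithinAt f (f' t) (Icc a b) t)
    (hf'c : ContinuousOn f' (Icc a b)) (hf : ∀ t ∈ Icc a b, f t = x'' t + c * x' t + k * x t)
    (ht : t ∈ Icc a b) :
    energy k x x' t - energy k x x' a =
      f t * x t - f a * x a - (∫ s in a..t, f' s * x s) - c * ∫ s in a..t, x' s ^ 2 := by
  have hsub : Icc a t ⊆ Icc a b := Icc_subset_Icc_right ht.2
  have hE : ∀ s ∈ Icc a b, HasDerivWithinAt (fun t => energy k x x' t - f t * x t)
      (-(f' s * x s) - c * x' s ^ 2) (Icc a b) s := fun s hs =>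
    hasDerivWithinAt_energy_sub_mul (hx' s hs) (hx'' s hs) (hf' s hs) (hf s hs)
  have hxc : ContinuousOn x (Icc a t) := fun s hs =>
    (hx' s (hsub hs)).continuousWithinAt.mono hsub
  have hx'c : ContinuousOn x' (Icc a t) := fun s hs =>
    (hx'' s (hsub hs)).continuousWithinAt.mono hsub
  have hf'x : IntervalIntegrable (fun s => f' s * x s) volume a t :=
    ((hf'c.mono hsub).mul hxc).intervalIntegrable_of_Icc ht.1
  have hx'2 : IntervalIntegrable (fun s => x' s ^ 2) volume a t :=
    (hx'c.pow 2).intervalIntegrable_of_Icc ht.1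
  have hftc := intervalIntegral.integral_eq_sub_of_hasDerivAt_of_le ht.1
    (fun s hs => (hE s (hsub hs)).continuousWithinAt.mono hsub)
    (fun s hs => (hE s (hsub (Ioo_subset_Icc_self hs))).hasDerivAt
      (Icc_mem_nhds hs.1 (hs.2.trans_le ht.2)))
    (hf'x.neg.sub (hx'2.const_mul c))
  rw [intervalIntegral.integral_sub (f := fun s => -(f' s * x s)) (g := fun s => c * x' s ^ 2)
    hf'x.neg (hx'2.const_mul c), intervalIntegral.integral_neg,
    intervalIntegral.integral_const_mul] at hftc
  linarith

theorem energy_le_of_dissipation {T : ℝ} (hc : 0 ≤ c)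
    (hx' : ∀ t ∈ Icc 0 T, HasDerivWithinAt x (x' t) (Icc 0 T) t)
    (hx'' : ∀ t ∈ Icc 0 T, HasDerivWithinAt x' (x'' t) (Icc 0 T) t)
    (hf' : ∀ t ∈ Icc 0 T, HasDerivWithinAt f (f' t) (Icc 0 T) t)
    (hf'c : ContinuousOn f' (Icc 0 T)) (hf : ∀ t ∈ Icc 0 T, f t = x'' t + c * x' t + k * x t)
    (ht : t ∈ Icc 0 T) :
    energy k x x' t ≤ f t * x t + (energy k x x' 0 - f 0 * x 0 +
      weightedNorm c T (fun s => exp (-c * s) * f' s) * weightedNorm c T x) := by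
  have hxc : ContinuousOn x (Icc 0 T) := fun s hs => (hx' s hs).continuousWithinAt
  have hforcing : |∫ s in (0 : ℝ)..t, f' s * x s| ≤
      weightedNorm c T (fun s => exp (-c * s) * f' s) * weightedNorm c T x := by
    have hweight :
        (fun s => f' s * x s) = fun s => exp (c * s) * (exp (-c * s) * f' s) * x s := by
      ext s
      rw [← mul_assoc, ← exp_add, neg_mul, add_neg_cancel, exp_zero, one_mul]
    rw [hweight]
    exact abs_integral_mul_le_weightedNorm_mul ht
      ((by fun_prop : Continuous fun s => exp (-c * s)).continuousOn.mul hf'c) hxc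
  have hdamping : 0 ≤ c * ∫ s in (0 : ℝ)..t, x' s ^ 2 :=
    mul_nonneg hc (intervalIntegral.integral_nonneg ht.1 fun s _ => sq_nonneg _)
  have hlaw := energy_dissipation_law hx' hx'' hf' hf'c hf ht
  linarith [neg_abs_le (∫ s in (0 : ℝ)..t, f' s * x s)]

end Oscillator

theorem weightedNorm_energy_le {k c T M : ℝ} {x x' f : ℝ → ℝ} (hc : c ≠ 0) (hT : 0 ≤ T)
    (hxc : ContinuousOn x (Icc 0 T)) (hx'c : ContinuousOn x' (Icc 0 T))
    (hfc : ContinuousOn f (Icc 0 T)) (hE : ∀ t ∈ Icc 0 T, energy k x x' t ≤ f t * x t + M) :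
    1 / 2 * weightedNorm c T x' ^ 2 + 1 / 2 * k * weightedNorm c T x ^ 2 ≤
      weightedNorm c T f * weightedNorm c T x + 1 / c * (exp (c * T) - 1) * M := by
  have hintegrable : ∀ g : ℝ → ℝ, ContinuousOn g (Icc 0 T) →
      IntervalIntegrable (fun t => exp (c * t) * g t) volume 0 T := fun g hg =>
    ((by fun_prop : Continuous fun t => exp (c * t)).continuousOn.mul hg).intervalIntegrable_of_Icc
      hT
  have hsq : ∀ g : ℝ → ℝ, weightedNorm c T g ^ 2 = ∫ t in (0 : ℝ)..T, exp (c * t) * g t ^ 2 :=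
    fun g => sq_sqrt (intervalIntegral.integral_nonneg hT fun t _ => by positivity)
  have hlhs : ∫ t in (0 : ℝ)..T, exp (c * t) * energy k x x' t =
      1 / 2 * weightedNorm c T x' ^ 2 + 1 / 2 * k * weightedNorm c T x ^ 2 := by
    have hsplit : (fun t => exp (c * t) * energy k x x' t) = fun t =>
        1 / 2 * (exp (c * t) * x' t ^ 2) + 1 / 2 * k * (exp (c * t) * x t ^ 2) := by
      ext t; unfold energy; ring
    rw [hsplit,
      intervalIntegral.integral_add ((hintegrable (fun t => x' t ^ 2) (hx'c.pow 2)).const_mul _)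
        ((hintegrable (fun t => x t ^ 2) (hxc.pow 2)).const_mul _),
      intervalIntegral.integral_const_mul, intervalIntegral.integral_const_mul, hsq, hsq]
  have hrhs : ∫ t in (0 : ℝ)..T, exp (c * t) * (f t * x t + M) =
      (∫ t in (0 : ℝ)..T, exp (c * t) * (f t * x t)) + 1 / c * (exp (c * T) - 1) * M := by
    simp only [mul_add]
    rw [intervalIntegral.integral_add (hintegrable (fun t => f t * x t) (hfc.mul hxc))
      (hintegrable (fun _ => M) continuousOn_const),
      intervalIntegral.integral_mul_const, integral_exp_mul hc, mul_zero, exp_zero]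
    ring
  have hmono : ∫ t in (0 : ℝ)..T, exp (c * t) * energy k x x' t ≤
      ∫ t in (0 : ℝ)..T, exp (c * t) * (f t * x t + M) :=
    intervalIntegral.integral_mono_on hT
      (hintegrable (energy k x x') (by unfold energy; fun_prop))
      (hintegrable (fun t => f t * x t + M) ((hfc.mul hxc).add continuousOn_const))
      fun t ht => mul_le_mul_of_nonneg_left (hE t ht) (exp_pos _).le
  have hcs : ∫ t in (0 : ℝ)..T, exp (c * t) * (f t * x t) ≤
      weightedNorm c T f * weightedNorm c T x := by
    simp only [← mul_assoc]
    exact (le_abs_self _).trans (abs_integral_mul_le_weightedNorm_mul ⟨hT, le_rfl⟩ hfc hxc)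
  linarith

theorem stmt15_general (k c : ℝ) (hc0 : 0 < c)
    (T : ℝ) (hT : 0 < T)
    (x x' x'' : ℝ → ℝ)
    (hx' : ∀ t ∈ Set.Icc (0:ℝ) T, HasDerivWithinAt x (x' t) (Set.Icc 0 T) t)
    (hx'' : ∀ t ∈ Set.Icc (0:ℝ) T, HasDerivWithinAt x' (x'' t) (Set.Icc 0 T) t)
    (f f' : ℝ → ℝ) (hf : f = fun t => x'' t + c * x' t + k * x t)
    (hf' : ∀ t ∈ Set.Icc (0:ℝ) T, HasDerivWithinAt f (f' t) (Set.Icc 0 T) t)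
    (hf'cont : ContinuousOn f' (Set.Icc 0 T))
    (normc : (ℝ → ℝ) → ℝ)
    (hnormc : normc = fun g => Real.sqrt (∫ t in (0:ℝ)..T, Real.exp (c * t) * g t ^ 2))
    (H0 : ℝ) (hH0 : H0 = (1 / 2) * (x' 0) ^ 2 + (1 / 2) * k * (x 0) ^ 2) :
    (1 / 2) * (normc x') ^ 2 + (1 / 2) * k * (normc x) ^ 2 ≤
      (normc f + (1 / c) * (Real.exp (c * T) - 1) *
          normc (fun t => Real.exp (-c * t) * f' t)) * normc x +
        (1 / c) * (Real.exp (c * T) - 1) * (H0 - f 0 * x 0) := by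
  obtain rfl : normc = weightedNorm c T := hnormc
  obtain rfl : H0 = energy k x x' 0 := hH0
  have hxc : ContinuousOn x (Icc 0 T) := fun t ht => (hx' t ht).continuousWithinAt
  have hx'c : ContinuousOn x' (Icc 0 T) := fun t ht => (hx'' t ht).continuousWithinAt
  have hfc : ContinuousOn f (Icc 0 T) := fun t ht => (hf' t ht).continuousWithinAt
  have hbound := weightedNorm_energy_le hc0.ne' hT.le hxc hx'c hfc fun t ht =>
    energy_le_of_dissipation hc0.le hx' hx'' hf' hf'cont (fun t _ => congrFun hf t) ht
  linear_combination hbound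

/-- A priori bound from the dissipation law. With
`‖g‖_c = (∫₀^T̄ e^{ct}g(t)² dt)^{1/2}` and `ℋ(0) = (1/2)ẋ(0)² + (1/2)kx(0)²`,
`(1/2)‖ẋ‖_c² + (1/2)k‖x‖_c² ≤ (‖f‖_c + (1/c)(e^{cT̄} − 1)‖e^{-c·}f'‖_c)‖x‖_c
  + (1/c)(e^{cT̄} − 1)(ℋ(0) − f(0)x(0))`. -/
theorem stmt15 (k c : ℝ) (hk : 0 < k) (hc0 : 0 < c)
    (T : ℝ) (hT : 0 < T)
    (x x' x'' : ℝ → ℝ)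
    (hx' : ∀ t ∈ Set.Icc (0:ℝ) T, HasDerivWithinAt x (x' t) (Set.Icc 0 T) t)
    (hx'' : ∀ t ∈ Set.Icc (0:ℝ) T, HasDerivWithinAt x' (x'' t) (Set.Icc 0 T) t)
    (hx''cont : ContinuousOn x'' (Set.Icc 0 T))
    (f f' : ℝ → ℝ) (hf : f = fun t => x'' t + c * x' t + k * x t)
    (hf' : ∀ t ∈ Set.Icc (0:ℝ) T, HasDerivWithinAt f (f' t) (Set.Icc 0 T) t)
    (hf'cont : ContinuousOn f' (Set.Icc 0 T))
    (normc : (ℝ → ℝ) → ℝ)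
    (hnormc : normc = fun g => Real.sqrt (∫ t in (0:ℝ)..T, Real.exp (c * t) * g t ^ 2))
    (H0 : ℝ) (hH0 : H0 = (1 / 2) * (x' 0) ^ 2 + (1 / 2) * k * (x 0) ^ 2) :
    (1 / 2) * (normc x') ^ 2 + (1 / 2) * k * (normc x) ^ 2 ≤
      (normc f + (1 / c) * (Real.exp (c * T) - 1) *
          normc (fun t => Real.exp (-c * t) * f' t)) * normc x +
        (1 / c) * (Real.exp (c * T) - 1) * (H0 - f 0 * x 0) :=
  stmt15_general k c hc0 T hT x x' x'' hx' hx'' f f' hf hf' hf'cont normc hnormc H0 hH0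
end
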